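/- arXiv:1202.0991 — 2 statements merged into one kernel-verified Lean document; each statement's English description precedes it below -/
import Mathlib

section
/- Let g : ℂ → ℂ be holomorphic near 0 with g(z) = e^{2πiα} z + r(z) where ‖r(z)‖ ≤ C‖z‖² on a disc, and let f(z) = z^λ with λ > 1 real (principal branch). Define h₁(z) = f⁻¹ ∘ g ∘ f(z) = e^{2πiα/λ} z (1 + r(z^λ)/(e^{2πiα}z^λ))^{1/λ}. Then for ‖z‖ sufficiently small, ‖h₁(z) − e^{2πiα/λ} z‖ ≤ (2C/λ)‖z‖^λ. -/
open Complex Metric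

/-!
Write the conjugate as `u z (1 + w)^{1/λ}` with `|u| = 1` and `w = r(z^λ)/(e^{2πiα} z^λ)`.
The quadratic bound on `r` gives `|w| ≤ C|z|^λ ≤ 1/2` for small `z`, and on the disc
`|ζ - 1| ≤ 1/2` the derivative `t ζ^{t-1}` of `ζ ↦ ζ^t` (`0 ≤ t ≤ 1`) has norm at most `2t`,
so the mean value inequality gives `|(1 + w)^{1/λ} - 1| ≤ (2/λ)|w|`. The remaining factor
`|z| < 1` is discarded.
-/

lemma one_half_le_norm_and_mem_slitPlane {z : ℂ} (hz : z ∈ closedBall (1 : ℂ) (1 / 2)) :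
    1 / 2 ≤ ‖z‖ ∧ z ∈ slitPlane := by
  rw [mem_closedBall, dist_eq_norm, norm_sub_rev] at hz
  have hre : (1 - z).re ≤ 1 / 2 := (re_le_norm _).trans hz
  have hnorm : ‖(1 : ℂ)‖ - ‖z‖ ≤ 1 / 2 := (norm_sub_norm_le 1 z).trans hz
  rw [sub_re, one_re] at hre
  rw [norm_one] at hnorm
  exact ⟨by linarith, Or.inl (by linarith)⟩

lemma norm_one_add_cpow_sub_one_le {w : ℂ} (hw : ‖w‖ ≤ 1 / 2) {t : ℝ} (ht0 : 0 ≤ t)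
    (ht1 : t ≤ 1) : ‖(1 + w) ^ (t : ℂ) - 1‖ ≤ 2 * t * ‖w‖ := by
  have hderiv : ∀ z ∈ closedBall (1 : ℂ) (1 / 2),
      HasDerivWithinAt (fun z : ℂ ↦ z ^ (t : ℂ)) (t * z ^ ((t : ℂ) - 1)) (closedBall 1 (1 / 2)) z :=
    fun z hz ↦ (hasStrictDerivAt_cpow_const
      (one_half_le_norm_and_mem_slitPlane hz).2).hasDerivAt.hasDerivWithinAt
  have hbound : ∀ z ∈ closedBall (1 : ℂ) (1 / 2), ‖(t : ℂ) * z ^ ((t : ℂ) - 1)‖ ≤ 2 * t := by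
    intro z hz
    have hz2 := (one_half_le_norm_and_mem_slitPlane hz).1
    have hexp : (t : ℂ) - 1 = ((t - 1 : ℝ) : ℂ) := by push_cast; rfl
    rw [hexp, norm_mul, norm_cpow_real, norm_real, Real.norm_of_nonneg ht0, mul_comm]
    gcongr
    calc ‖z‖ ^ (t - 1) ≤ (1 / 2 : ℝ) ^ (t - 1) :=
          Real.rpow_le_rpow_of_nonpos (by norm_num) hz2 (by linarith)
      _ ≤ (1 / 2 : ℝ) ^ (-1 : ℝ) :=
          Real.rpow_le_rpow_of_exponent_ge (by norm_num) (by norm_num) (by linarith)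
      _ = 2 := by norm_num
  have hmem : 1 + w ∈ closedBall (1 : ℂ) (1 / 2) := by simpa using hw
  simpa using (convex_closedBall (1 : ℂ) (1 / 2)).norm_image_sub_le_of_norm_hasDerivWithin_le
    hderiv hbound (mem_closedBall_self (by norm_num)) hmem

lemma norm_div_mul_le_of_norm_le_sq {a E Z : ℂ} {C : ℝ} (hE : ‖E‖ = 1)
    (ha : ‖a‖ ≤ C * ‖Z‖ ^ 2) : ‖a / (E * Z)‖ ≤ C * ‖Z‖ := by
  rw [norm_div, norm_mul, hE, one_mul]
  rcases eq_or_ne Z 0 with rfl | hZ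
  · simp
  rw [div_le_iff₀ (norm_pos_iff.mpr hZ)]
  linarith

lemma norm_mul_mul_one_add_cpow_sub_le {u z w : ℂ} (hu : ‖u‖ = 1) (hw : ‖w‖ ≤ 1 / 2) {t : ℝ}
    (ht0 : 0 ≤ t) (ht1 : t ≤ 1) : ‖u * z * (1 + w) ^ (t : ℂ) - u * z‖ ≤ 2 * t * ‖w‖ * ‖z‖ := by
  rw [← mul_sub_one, norm_mul, norm_mul, hu, one_mul, mul_comm]
  gcongr
  exact norm_one_add_cpow_sub_one_le hw ht0 ht1

theorem stmt1_general (α lam C : ℝ) (hlam : 1 < lam) (hC : 0 < C)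
    (r : ℂ → ℂ) (R : ℝ) (hR : 0 < R)
    (hr : ∀ z : ℂ, ‖z‖ < R → ‖r z‖ ≤ C * ‖z‖ ^ 2) :
    ∃ δ > 0, ∀ z : ℂ, z ≠ 0 → ‖z‖ < δ →
      ‖Complex.exp (2 * (Real.pi : ℂ) * Complex.I * (α : ℂ) / (lam : ℂ)) * z *
          (1 + r (z ^ (lam : ℂ)) /
              (Complex.exp (2 * (Real.pi : ℂ) * Complex.I * (α : ℂ)) * z ^ (lam : ℂ)))
            ^ ((lam : ℂ)⁻¹)
        - Complex.exp (2 * (Real.pi : ℂ) * Complex.I * (α : ℂ) / (lam : ℂ)) * z‖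
        ≤ (2 * C / lam) * ‖z‖ ^ lam := by
  refine ⟨min (min 1 R) (1 / (2 * C)), by positivity, fun z _ hzδ ↦ ?_⟩
  simp only [lt_min_iff] at hzδ
  obtain ⟨⟨hz1, hzR⟩, hzC⟩ := hzδ
  have hzlam : ‖z‖ ^ lam ≤ ‖z‖ := Real.rpow_le_self_of_le_one (norm_nonneg z) hz1.le hlam.le
  set w := r (z ^ (lam : ℂ)) / (exp (2 * Real.pi * I * α) * z ^ (lam : ℂ))
  have hw : ‖w‖ ≤ C * ‖z‖ ^ lam := by
    have hZR : ‖z ^ (lam : ℂ)‖ < R := by rw [norm_cpow_real]; linarith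
    rw [← norm_cpow_real]
    exact norm_div_mul_le_of_norm_le_sq (by rw [norm_exp]; simp) (hr _ hZR)
  have hw2 : ‖w‖ ≤ 1 / 2 := by
    rw [lt_div_iff₀ (by positivity)] at hzC
    nlinarith
  have hmain := norm_mul_mul_one_add_cpow_sub_le (u := exp (2 * Real.pi * I * α / lam)) (z := z)
    (by rw [norm_exp]; simp) hw2 (inv_nonneg.mpr (by linarith)) (inv_le_one_of_one_le₀ hlam.le)
  rw [ofReal_inv] at hmain
  calc _ ≤ 2 * lam⁻¹ * ‖w‖ * ‖z‖ := hmain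
    _ ≤ 2 * lam⁻¹ * (C * ‖z‖ ^ lam) * 1 := by gcongr
    _ = 2 * C / lam * ‖z‖ ^ lam := by ring

/-- with `g(z) = e^{2πiα} z + r(z)`, `‖r z‖ ≤ C‖z‖²` near `0`, and
`f(z) = z^λ` (principal branch), the conjugate
`h₁(z) = e^{2πiα/λ} z (1 + r(z^λ)/(e^{2πiα} z^λ))^{1/λ}` satisfies
`‖h₁(z) − e^{2πiα/λ} z‖ ≤ (2C/λ)‖z‖^λ` for `‖z‖` sufficiently small. -/
theorem stmt1 (α lam C : ℝ) (hα : α ∈ Set.Ioo (0:ℝ) 1) (hlam : 1 < lam) (hC : 0 < C)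
    (r : ℂ → ℂ) (R : ℝ) (hR : 0 < R)
    (hr : ∀ z : ℂ, ‖z‖ < R → ‖r z‖ ≤ C * ‖z‖ ^ 2) :
    ∃ δ > 0, ∀ z : ℂ, z ≠ 0 → ‖z‖ < δ →
      ‖Complex.exp (2 * (Real.pi : ℂ) * Complex.I * (α : ℂ) / (lam : ℂ)) * z *
          (1 + r (z ^ (lam : ℂ)) /
              (Complex.exp (2 * (Real.pi : ℂ) * Complex.I * (α : ℂ)) * z ^ (lam : ℂ)))
            ^ ((lam : ℂ)⁻¹)
        - Complex.exp (2 * (Real.pi : ℂ) * Complex.I * (α : ℂ) / (lam : ℂ)) * z‖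
        ≤ (2 * C / lam) * ‖z‖ ^ lam :=
  stmt1_general α lam C hlam hC r R hR hr
end

section
/- Let h(z) = z + z^{p+1} for a fixed p ≥ 1 (or more generally a holomorphic germ h(z) = z + z^{p+1} + higher order terms). There exists z₀ ≠ 0 arbitrarily close to 0 and a neighborhood V of z₀ such that the forward iterates V, h(V), h²(V), … are pairwise disjoint and converge to 0. -/
/-!
In the Fatou coordinate `w = -1/(p z^p)` the map `h z = z + z^(p+1)` is asymptotically the
translation `w ↦ w + 1` as `z → 0`: writing `u = z^p`, the increment `w(h z) - w(z)` is `-1/p`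
times the difference quotient at `0` of `u ↦ (1 + u)^(-p)`, whose derivative there is `-p`.
Hence on a petal `{Re w ≥ R}` with `R` large, `h` is injective (it is tangent to the identity)
and raises `Re w` by at least `1/2`. A set on which `Re w` varies by less than `1/2` then cannot
meet any of its later images, and its images converge to `0` because `|z|^p ≤ 1/(p Re w)`.
-/

open Set Filter Topology Function

section Wandering

variable {α : Type*} {f : α → α} {φ : α → ℝ} {P : Set α} {c : ℝ}

theorem add_mul_le_iterate (hP : MapsTo f P P) (hφ : ∀ x ∈ P, φ x + c ≤ φ (f x))
    {x : α} (hx : x ∈ P) (n : ℕ) : φ x + n * c ≤ φ (f^[n] x) := by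
  induction n with
  | zero => simp
  | succ n ih =>
    rw [iterate_succ_apply']
    have := hφ _ (hP.iterate n hx)
    push_cast
    linarith

theorem pairwise_disjoint_image_iterate (hP : MapsTo f P P) (hinj : InjOn f P)
    (hφ : ∀ x ∈ P, φ x + c ≤ φ (f x)) {V : Set α} {a : ℝ} (hV : V ⊆ P)
    (hφV : ∀ x ∈ V, φ x ∈ Ioo a (a + c)) :
    Pairwise (Disjoint on fun n => f^[n] '' V) := by
  refine (pairwise_disjoint_on _).2 fun i j hij => ?_
  obtain ⟨m, rfl⟩ := Nat.exists_eq_add_of_lt hij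
  rw [disjoint_left]
  rintro _ ⟨v, hv, rfl⟩ ⟨v', hv', hvv'⟩
  rw [add_assoc, iterate_add_apply] at hvv'
  have hv_eq : f^[m + 1] v' = v :=
    hinj.iterate hP i (hP.iterate _ (hV hv')) (hV hv) hvv'
  have hgrowth := hv_eq ▸ add_mul_le_iterate hP hφ (hV hv') (m + 1)
  obtain ⟨hv'a, hv'c⟩ := hφV v' hv'
  have hc : 0 ≤ m * c := mul_nonneg m.cast_nonneg (by linarith)
  push_cast at hgrowth
  linarith [(hφV v hv).2]

end Wandering

namespace Parabolic

noncomputable def fatouCoord (p : ℕ) (z : ℂ) : ℂ := -((p : ℂ) * z ^ p)⁻¹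

def petal (p : ℕ) (R : ℝ) : Set ℂ := {z | R ≤ (fatouCoord p z).re}

@[simp] theorem fatouCoord_zero (p : ℕ) : fatouCoord p 0 = 0 := by
  rcases eq_or_ne p 0 with rfl | hp <;> simp [fatouCoord, *]

theorem norm_fatouCoord (p : ℕ) (z : ℂ) : ‖fatouCoord p z‖ = (p * ‖z‖ ^ p)⁻¹ := by
  simp [fatouCoord]

-- Holds for every `z`, including `z = 0` and `z^p = -1`, because of the convention `0⁻¹ = 0`.
theorem fatouCoord_add_pow_sub (p : ℕ) (z : ℂ) :
    fatouCoord p (z + z ^ (p + 1)) - fatouCoord p z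
      = -(p : ℂ)⁻¹ * slope (fun u : ℂ => ((1 + u) ^ p)⁻¹) 0 (z ^ p) := by
  rw [show z + z ^ (p + 1) = z * (1 + z ^ p) by ring]
  simp only [fatouCoord, slope_def_field, mul_pow, mul_inv, add_zero, one_pow, inv_one,
    sub_zero, sub_neg_eq_add, neg_mul]
  ring

section
variable {p : ℕ}

theorem exists_fatouCoord_eq (hp : p ≠ 0) (w : ℂ) : ∃ z, fatouCoord p z = w := by
  obtain ⟨z, hz⟩ :=
    IsAlgClosed.exists_pow_nat_eq (-((p : ℂ) * w)⁻¹) (Nat.pos_of_ne_zero hp)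
  refine ⟨z, ?_⟩
  simp only [fatouCoord, hz, mul_inv, inv_neg, inv_inv, mul_neg, neg_neg]
  field_simp

theorem tendsto_fatouCoord_add_pow_sub (hp : p ≠ 0) :
    Tendsto (fun z => fatouCoord p (z + z ^ (p + 1)) - fatouCoord p z) (𝓝[≠] 0) (𝓝 1) := by
  have hderiv : HasDerivAt (fun u : ℂ => ((1 + u) ^ p)⁻¹) (-p) 0 := by
    simpa using (((hasDerivAt_id' (0 : ℂ)).const_add 1).fun_pow p).fun_inv (by simp)
  have hpow : Tendsto (fun z : ℂ => z ^ p) (𝓝[≠] 0) (𝓝[≠] 0) :=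
    tendsto_nhdsWithin_of_tendsto_nhds_of_eventually_within _
      ((continuous_pow p).tendsto' 0 0 (zero_pow hp) |>.mono_left nhdsWithin_le_nhds)
      (eventually_nhdsWithin_of_forall fun z hz => pow_ne_zero p hz)
  have hlim : -(p : ℂ)⁻¹ * -p = 1 := by field_simp
  exact hlim ▸ (((hasDerivAt_iff_tendsto_slope.1 hderiv).comp hpow).const_mul _).congr
    fun z => (fatouCoord_add_pow_sub p z).symm

theorem ne_zero_of_mem_petal {R : ℝ} (hR : 0 < R) {z : ℂ} (hz : z ∈ petal p R) : z ≠ 0 := by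
  rintro rfl
  have : R ≤ 0 := by simpa [petal] using hz
  linarith

theorem eventually_petal_subset (hp : p ≠ 0) {U : Set ℂ} (hU : U ∈ 𝓝[≠] 0) :
    ∀ᶠ R in atTop, petal p R ⊆ U := by
  obtain ⟨r, hr, hrU⟩ := Metric.mem_nhdsWithin_iff.1 hU
  have hpr : 0 < (p * r ^ p)⁻¹ := by positivity
  filter_upwards [eventually_gt_atTop (p * r ^ p)⁻¹] with R hR z hz
  refine hrU ⟨?_, ne_zero_of_mem_petal (hpr.trans hR) hz⟩
  rw [mem_ball_zero_iff]
  by_contra! hrz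
  have : (p * ‖z‖ ^ p)⁻¹ ≤ (p * r ^ p)⁻¹ := by gcongr
  linarith [hz.trans ((fatouCoord p z).re_le_norm), norm_fatouCoord p z]

theorem isOpen_setOf_re_fatouCoord_mem_Ioo (hp : p ≠ 0) {a b : ℝ} (ha : 0 ≤ a) :
    IsOpen {z | (fatouCoord p z).re ∈ Ioo a b} := by
  refine isOpen_iff_mem_nhds.2 fun z hz => ?_
  have hz0 : z ≠ 0 := by
    rintro rfl
    have : a < 0 := by simpa using hz.1
    linarith
  have hcont : ContinuousAt (fun z => (fatouCoord p z).re) z := by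
    have : (p : ℂ) * z ^ p ≠ 0 := mul_ne_zero (Nat.cast_ne_zero.2 hp) (pow_ne_zero _ hz0)
    exact Complex.continuous_re.continuousAt.comp
      ((continuousAt_const.mul (continuousAt_pow _ _)).inv₀ this).neg
  exact hcont.preimage_mem_nhds (isOpen_Ioo.mem_nhds hz)

theorem exists_mem_nhds_injOn_add_pow (hp : p ≠ 0) :
    ∃ U ∈ 𝓝 (0 : ℂ), InjOn (fun z : ℂ => z + z ^ (p + 1)) U := by
  have hderiv : HasStrictDerivAt (fun z : ℂ => z + z ^ (p + 1)) 1 0 := by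
    simpa [hp] using (hasStrictDerivAt_id (0 : ℂ)).fun_add (hasStrictDerivAt_pow (p + 1) 0)
  exact ⟨_, hderiv.eventually_left_inverse one_ne_zero, LeftInvOn.injOn fun _ hx => hx⟩

theorem eventually_petal_attracting (hp : p ≠ 0) :
    ∀ᶠ R in atTop, InjOn (fun z : ℂ => z + z ^ (p + 1)) (petal p R) ∧
      ∀ z ∈ petal p R, (fatouCoord p z).re + 1 / 2 ≤ (fatouCoord p (z + z ^ (p + 1))).re := by
  obtain ⟨U, hU, hinj⟩ := exists_mem_nhds_injOn_add_pow hp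
  have hstep :
      ∀ᶠ z in 𝓝[≠] 0, 1 / 2 ≤ (fatouCoord p (z + z ^ (p + 1)) - fatouCoord p z).re :=
    (tendsto_fatouCoord_add_pow_sub hp).eventually
      ((Complex.continuous_re.tendsto 1).eventually (eventually_ge_nhds (by norm_num)))
  filter_upwards [eventually_petal_subset hp (mem_nhdsWithin_of_mem_nhds hU),
    eventually_petal_subset hp hstep] with R hRinj hRstep
  refine ⟨hinj.mono hRinj, fun z hz => ?_⟩
  have hzstep : 1 / 2 ≤ (fatouCoord p (z + z ^ (p + 1)) - fatouCoord p z).re := hRstep hz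
  linarith [Complex.sub_re (fatouCoord p (z + z ^ (p + 1))) (fatouCoord p z)]

end

end Parabolic

open Parabolic in
/-- the parabolic germ `h(z) = z + z^{p+1}`, `p ≥ 1`, has wandering
neighborhoods: arbitrarily close to `0` there is `z₀ ≠ 0` and a neighborhood `V`
of `z₀` whose forward iterated images are pairwise disjoint and converge to `0`. -/
theorem stmt5 (p : ℕ) (hp : 1 ≤ p) :
    ∀ ε > 0, ∃ z₀ : ℂ, z₀ ≠ 0 ∧ ‖z₀‖ < ε ∧
      ∃ V : Set ℂ, IsOpen V ∧ z₀ ∈ V ∧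
        (∀ i j : ℕ, i ≠ j →
          Disjoint ((fun z : ℂ => z + z ^ (p+1))^[i] '' V)
            ((fun z : ℂ => z + z ^ (p+1))^[j] '' V)) ∧
        (∀ δ > 0, ∃ N : ℕ, ∀ n ≥ N,
          (fun z : ℂ => z + z ^ (p+1))^[n] '' V ⊆ Metric.ball 0 δ) := by
  intro ε hε
  have hp0 : p ≠ 0 := Nat.one_le_iff_ne_zero.1 hp
  have hball {r : ℝ} (hr : 0 < r) : Metric.ball (0 : ℂ) r ∈ 𝓝[≠] 0 :=
    mem_nhdsWithin_of_mem_nhds (Metric.ball_mem_nhds 0 hr)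
  obtain ⟨R, hR0, ⟨hinj, hstep⟩, hRε⟩ := ((eventually_gt_atTop 0).and
    ((eventually_petal_attracting hp0).and (eventually_petal_subset hp0 (hball hε)))).exists
  have hmaps : MapsTo (fun z : ℂ => z + z ^ (p + 1)) (petal p R) (petal p R) :=
    fun z hz => show R ≤ _ by linarith [hstep z hz, show R ≤ (fatouCoord p z).re from hz]
  obtain ⟨z₀, hz₀⟩ := exists_fatouCoord_eq hp0 ((R + 1 / 4 : ℝ) : ℂ)
  have hz₀R : z₀ ∈ petal p R := by simp [petal, hz₀]
  refine ⟨z₀, ne_zero_of_mem_petal hR0 hz₀R, mem_ball_zero_iff.1 (hRε hz₀R),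
    {z | (fatouCoord p z).re ∈ Ioo R (R + 1 / 2)}, isOpen_setOf_re_fatouCoord_mem_Ioo hp0 hR0.le,
    ?_, fun i j hij => pairwise_disjoint_image_iterate hmaps hinj hstep (fun z hz => hz.1.le)
      (fun z hz => hz) hij, fun δ hδ => ?_⟩
  · show (fatouCoord p z₀).re ∈ Ioo R (R + 1 / 2)
    rw [hz₀, Complex.ofReal_re]
    constructor <;> linarith
  · have hlevel : Tendsto (fun n : ℕ => R + n * (1 / 2)) atTop atTop :=
      tendsto_atTop_add_const_left _ _ (tendsto_natCast_atTop_atTop.atTop_mul_const (by norm_num))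
    obtain ⟨N, hN⟩ :=
      eventually_atTop.1 (hlevel.eventually (eventually_petal_subset hp0 (hball hδ)))
    refine ⟨N, fun n hn => ?_⟩
    rintro _ ⟨v, hv, rfl⟩
    exact hN n hn (show R + n * (1 / 2) ≤ _ by
      linarith [hv.1, add_mul_le_iterate hmaps hstep hv.1.le n])
end
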